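/- arXiv:math/9201287 — 3 statements merged into one kernel-verified Lean document; each statement's English description precedes it below -/
import Mathlib

section
/- Let f : ℝ → ℝ be differentiable with f'(c) = 0 at some point c, and suppose there exists γ > 1 such that the limits A = lim_{x→c⁺} f'(x)/|x−c|^{γ−1} and B = lim_{x→c⁻} f'(x)/|x−c|^{γ−1} exist and are nonzero. If h : ℝ → ℝ is an orientation-preserving C¹ diffeomorphism, then the conjugated map g = h ∘ f ∘ h⁻¹ has a power law critical point at h(c) with the same exponent γ. -/
open Filter Topology

private lemma aux_key {h hi : ℝ → ℝ} (hh : ContDiff ℝ 1 h) (hhi : ContDiff ℝ 1 hi)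
    (hright : Function.RightInverse hi h) (y : ℝ) :
    deriv h (hi y) * deriv hi y = 1 := by
  have h1 : HasDerivAt (h ∘ hi) (deriv h (hi y) * deriv hi y) y :=
    ((hh.differentiable one_ne_zero (hi y)).hasDerivAt).comp y
      ((hhi.differentiable one_ne_zero y).hasDerivAt)
  have h2 : (h ∘ hi) = id := funext hright
  rw [h2] at h1
  exact h1.unique (hasDerivAt_id y)

private lemma aux_tendsto (f h hi : ℝ → ℝ) (c γ L : ℝ)
    (hf : Differentiable ℝ f)
    (hh : ContDiff ℝ 1 h) (hhi : ContDiff ℝ 1 hi)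
    (hpos : ∀ x, 0 < deriv h x)
    (hright : Function.RightInverse hi h)
    (hhic : hi (h c) = c)
    (l : Filter ℝ) (hl : l ≤ 𝓝[≠] (h c))
    (hlim : Tendsto (fun y => deriv f (hi y) / |hi y - c| ^ (γ - 1)) l (𝓝 L))
    (hne : ∀ᶠ y in l, hi y ≠ c) :
    Tendsto (fun y => deriv (h ∘ f ∘ hi) y / |y - h c| ^ (γ - 1)) l
      (𝓝 (deriv h (f c) * deriv hi (h c) * L * deriv hi (h c) ^ (γ - 1))) := by
  have hipos : ∀ y, 0 < deriv hi y := by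
    intro y
    nlinarith [aux_key hh hhi hright y, hpos (hi y)]
  have hln : l ≤ 𝓝 (h c) := hl.trans nhdsWithin_le_nhds
  have htendhi : Tendsto hi l (𝓝 c) := by
    have := (hhi.continuous.tendsto (h c)).mono_left hln
    rwa [hhic] at this
  -- piece 1
  have T1 : Tendsto (fun y => deriv h (f (hi y))) l (𝓝 (deriv h (f c))) :=
    ((hh.continuous_deriv le_rfl).tendsto (f c)).comp
      ((hf.continuous.tendsto c).comp htendhi)
  -- piece 2
  have T2 : Tendsto (fun y => deriv hi y) l (𝓝 (deriv hi (h c))) :=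
    ((hhi.continuous_deriv le_rfl).tendsto (h c)).comp hln
  -- piece 4 : slope
  have hd : HasDerivAt hi (deriv hi (h c)) (h c) := (hhi.differentiable one_ne_zero (h c)).hasDerivAt
  have Tslope : Tendsto (slope hi (h c)) l (𝓝 (deriv hi (h c))) :=
    (hasDerivAt_iff_tendsto_slope.mp hd).mono_left hl
  have Tabs : Tendsto (fun y => |slope hi (h c) y|) l (𝓝 (deriv hi (h c))) := by
    have := (continuous_abs.tendsto (deriv hi (h c))).comp Tslope
    rwa [abs_of_pos (hipos (h c))] at this
  have T4 : Tendsto (fun y => |slope hi (h c) y| ^ (γ - 1)) l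
      (𝓝 (deriv hi (h c) ^ (γ - 1))) :=
    ((Real.continuousAt_rpow_const _ _ (Or.inl (hipos (h c)).ne')).tendsto).comp Tabs
  have TG : Tendsto (fun y => deriv h (f (hi y)) * deriv hi y *
      (deriv f (hi y) / |hi y - c| ^ (γ - 1)) * |slope hi (h c) y| ^ (γ - 1)) l
      (𝓝 (deriv h (f c) * deriv hi (h c) * L * deriv hi (h c) ^ (γ - 1))) :=
    ((T1.mul T2).mul hlim).mul T4
  refine TG.congr' ?_
  have hney : ∀ᶠ y in l, y ≠ h c := hl self_mem_nhdsWithin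
  filter_upwards [hne, hney] with y hyne hyhc
  have hdg : deriv (h ∘ f ∘ hi) y
      = deriv h (f (hi y)) * (deriv f (hi y) * deriv hi y) := by
    have h1 : HasDerivAt (f ∘ hi) (deriv f (hi y) * deriv hi y) y :=
      ((hf (hi y)).hasDerivAt).comp y ((hhi.differentiable one_ne_zero y).hasDerivAt)
    exact (((hh.differentiable one_ne_zero (f (hi y))).hasDerivAt).comp y h1).deriv
  have hslope : slope hi (h c) y = (hi y - c) / (y - h c) := by
    rw [slope_def_field, hhic]
  have hp : (0:ℝ) < |hi y - c| ^ (γ - 1) :=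
    Real.rpow_pos_of_pos (abs_pos.mpr (sub_ne_zero.mpr hyne)) _
  have hq : (0:ℝ) < |y - h c| ^ (γ - 1) :=
    Real.rpow_pos_of_pos (abs_pos.mpr (sub_ne_zero.mpr hyhc)) _
  rw [hslope, abs_div, Real.div_rpow (abs_nonneg _) (abs_nonneg _), hdg]
  field_simp

theorem stmt_3 (f h hi : ℝ → ℝ) (c γ A B : ℝ)
    (hf : Differentiable ℝ f) (hc : deriv f c = 0) (hγ : 1 < γ)
    (hA : A ≠ 0) (hB : B ≠ 0)
    (hlimA : Tendsto (fun x => deriv f x / |x - c| ^ (γ - 1)) (𝓝[<] c) (𝓝 A))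
    (hlimB : Tendsto (fun x => deriv f x / |x - c| ^ (γ - 1)) (𝓝[>] c) (𝓝 B))
    (hh : ContDiff ℝ 1 h) (hhi : ContDiff ℝ 1 hi)
    (hpos : ∀ x, 0 < deriv h x)
    (hleft : Function.LeftInverse hi h) (hright : Function.RightInverse hi h) :
    ∃ A' B' : ℝ, A' ≠ 0 ∧ B' ≠ 0 ∧
      Tendsto (fun y => deriv (h ∘ f ∘ hi) y / |y - h c| ^ (γ - 1)) (𝓝[<] (h c)) (𝓝 A') ∧
      Tendsto (fun y => deriv (h ∘ f ∘ hi) y / |y - h c| ^ (γ - 1)) (𝓝[>] (h c)) (𝓝 B') := by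
  have hhic : hi (h c) = c := hleft c
  have hipos : ∀ y, 0 < deriv hi y := by
    intro y
    nlinarith [aux_key hh hhi hright y, hpos (hi y)]
  have himono : StrictMono hi := strictMono_of_deriv_pos hipos
  -- left side
  have htend : Tendsto hi (𝓝 (h c)) (𝓝 c) := by
    have := hhi.continuous.tendsto (h c); rwa [hhic] at this
  have hmemL : ∀ᶠ y in 𝓝[<] (h c), hi y ∈ Set.Iio c :=
    eventually_nhdsWithin_of_forall (fun y hy => by
      have := himono hy; rwa [hhic] at this)
  have htendL : Tendsto hi (𝓝[<] (h c)) (𝓝[<] c) :=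
    tendsto_nhdsWithin_iff.mpr ⟨htend.mono_left nhdsWithin_le_nhds, hmemL⟩
  have hmemR : ∀ᶠ y in 𝓝[>] (h c), hi y ∈ Set.Ioi c :=
    eventually_nhdsWithin_of_forall (fun y hy => by
      have := himono hy; rwa [hhic] at this)
  have htendR : Tendsto hi (𝓝[>] (h c)) (𝓝[>] c) :=
    tendsto_nhdsWithin_iff.mpr ⟨htend.mono_left nhdsWithin_le_nhds, hmemR⟩
  have hlL : 𝓝[<] (h c) ≤ 𝓝[≠] (h c) :=
    nhdsWithin_mono _ (fun y hy => ne_of_lt hy)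
  have hlR : 𝓝[>] (h c) ≤ 𝓝[≠] (h c) :=
    nhdsWithin_mono _ (fun y hy => ne_of_gt hy)
  have hd0 : 0 < deriv h (f c) := hpos _
  have hd1 : 0 < deriv hi (h c) := hipos _
  have hd2 : 0 < deriv hi (h c) ^ (γ - 1) := Real.rpow_pos_of_pos hd1 _
  refine ⟨deriv h (f c) * deriv hi (h c) * A * deriv hi (h c) ^ (γ - 1),
    deriv h (f c) * deriv hi (h c) * B * deriv hi (h c) ^ (γ - 1),
    mul_ne_zero (mul_ne_zero (mul_ne_zero hd0.ne' hd1.ne') hA) hd2.ne',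
    mul_ne_zero (mul_ne_zero (mul_ne_zero hd0.ne' hd1.ne') hB) hd2.ne', ?_, ?_⟩
  · exact aux_tendsto f h hi c γ A hf hh hhi hpos hright hhic _ hlL
      (hlimA.comp htendL) (hmemL.mono fun y hy => ne_of_lt hy)
  · exact aux_tendsto f h hi c γ B hf hh hhi hpos hright hhic _ hlR
      (hlimB.comp htendR) (hmemR.mono fun y hy => ne_of_gt hy)
end

section
/- Let f : ℝ → ℝ have a power law critical point at c with exponent γ > 1 and one-sided limits A = lim_{x→c⁻} f'(x)/|x−c|^{γ−1} and B = lim_{x→c⁺} f'(x)/|x−c|^{γ−1}, both nonzero. Define the asymmetry τ = A/B. If h is an orientation-preserving C¹ diffeomorphism of ℝ, then the asymmetry of h ∘ f ∘ h⁻¹ at h(c) equals τ. -/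
open Filter Topology

private lemma conj_limit (f h hi : ℝ → ℝ) (c γ A : ℝ)
    (hf : Differentiable ℝ f) (hγ : 1 < γ)
    (hh : ContDiff ℝ 1 h) (hhi : ContDiff ℝ 1 hi)
    (hleft : Function.LeftInverse hi h)
    (hipos : ∀ y, 0 < deriv hi y)
    (l : Filter ℝ) [l.NeBot] (hl : l ≤ 𝓝[≠] (h c))
    (s : Set ℝ) (hscne : c ∉ s)
    (hs : Tendsto hi l (𝓝[s] c)) (hsev : ∀ᶠ y in l, hi y ∈ s)
    (hlimA : Tendsto (fun x => deriv f x / |x - c| ^ (γ - 1)) (𝓝[s] c) (𝓝 A))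
    (A' : ℝ)
    (hA' : Tendsto (fun y => deriv (h ∘ f ∘ hi) y / |y - h c| ^ (γ - 1)) l (𝓝 A')) :
    A' = deriv h (f c) * (A * (deriv hi (h c) * (deriv hi (h c)) ^ (γ - 1))) := by
  have hdh : Differentiable ℝ h := hh.differentiable one_ne_zero
  have hdhi : Differentiable ℝ hi := hhi.differentiable one_ne_zero
  have hihc : hi (h c) = c := hleft c
  have hlnhds : Tendsto (fun y => y) l (𝓝 (h c)) := hl.trans nhdsWithin_le_nhds
  have hlne : ∀ᶠ y in l, y ≠ h c := hl (by
    simp only [mem_nhdsWithin]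
    exact ⟨Set.univ, isOpen_univ, trivial, fun y hy => hy.2⟩)
  have hhine : ∀ᶠ y in l, hi y ≠ c := hsev.mono (fun y hy hc' => hscne (hc' ▸ hy))
  have hhil : Tendsto hi l (𝓝 c) := hs.mono_right nhdsWithin_le_nhds
  -- slope limit
  have hslope : Tendsto (fun y => |hi y - c| / |y - h c|) l (𝓝 (deriv hi (h c))) := by
    have hd : HasDerivAt hi (deriv hi (h c)) (h c) := (hdhi (h c)).hasDerivAt
    have h1 : Tendsto (slope hi (h c)) l (𝓝 (deriv hi (h c))) :=
      (hasDerivAt_iff_tendsto_slope.1 hd).mono_left hl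
    have h2 : Tendsto (fun y => |slope hi (h c) y|) l (𝓝 |deriv hi (h c)|) :=
      (continuous_abs.tendsto _).comp h1
    rw [abs_of_pos (hipos (h c))] at h2
    refine h2.congr (fun y => ?_)
    rw [slope_def_field, abs_div, hihc]
  -- ratio to the power
  have hdpos : 0 < deriv hi (h c) := hipos (h c)
  have hT4 : Tendsto (fun y => (|hi y - c| / |y - h c|) ^ (γ - 1)) l
      (𝓝 ((deriv hi (h c)) ^ (γ - 1))) :=
    (Real.continuousAt_rpow_const _ _ (Or.inl hdpos.ne')).tendsto.comp hslope
  -- other factors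
  have hT1 : Tendsto (fun y => deriv h (f (hi y))) l (𝓝 (deriv h (f c))) :=
    ((hh.continuous_deriv le_rfl).tendsto _).comp ((hf.continuous.tendsto _).comp hhil)
  have hT2 : Tendsto (fun y => deriv f (hi y) / |hi y - c| ^ (γ - 1)) l (𝓝 A) := hlimA.comp hs
  have hT3 : Tendsto (fun y => deriv hi y) l (𝓝 (deriv hi (h c))) :=
    ((hhi.continuous_deriv le_rfl).tendsto _).comp hlnhds
  have hG : Tendsto (fun y => deriv h (f (hi y)) * ((deriv f (hi y) / |hi y - c| ^ (γ - 1)) *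
      (deriv hi y * (|hi y - c| / |y - h c|) ^ (γ - 1)))) l
      (𝓝 (deriv h (f c) * (A * (deriv hi (h c) * (deriv hi (h c)) ^ (γ - 1))))) :=
    hT1.mul (hT2.mul (hT3.mul hT4))
  -- eventual equality
  have heq : ∀ᶠ y in l, deriv (h ∘ f ∘ hi) y / |y - h c| ^ (γ - 1) =
      deriv h (f (hi y)) * ((deriv f (hi y) / |hi y - c| ^ (γ - 1)) *
      (deriv hi y * (|hi y - c| / |y - h c|) ^ (γ - 1))) := by
    filter_upwards [hlne, hhine] with y hy1 hy2
    have hx : (0:ℝ) < |hi y - c| := abs_pos.2 (sub_ne_zero.2 hy2)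
    have hy : (0:ℝ) < |y - h c| := abs_pos.2 (sub_ne_zero.2 hy1)
    have hx1 : |hi y - c| ^ (γ - 1) ≠ 0 := (Real.rpow_pos_of_pos hx _).ne'
    have hy1' : |y - h c| ^ (γ - 1) ≠ 0 := (Real.rpow_pos_of_pos hy _).ne'
    have hder : deriv (h ∘ f ∘ hi) y = deriv h (f (hi y)) * (deriv f (hi y) * deriv hi y) := by
      have e1 : deriv (h ∘ (f ∘ hi)) y = deriv h ((f ∘ hi) y) * deriv (f ∘ hi) y :=
        deriv_comp (x := y) (hdh _) ((hf _).comp y (hdhi y))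
      have e2 : deriv (f ∘ hi) y = deriv f (hi y) * deriv hi y :=
        deriv_comp (x := y) (hf _) (hdhi y)
      simpa [Function.comp, e2] using e1
    rw [hder, Real.div_rpow hx.le hy.le]
    field_simp
  exact tendsto_nhds_unique (hA'.congr' heq) hG

theorem stmt_4 (f h hi : ℝ → ℝ) (c γ A B : ℝ)
    (hf : Differentiable ℝ f) (hc : deriv f c = 0) (hγ : 1 < γ)
    (hA : A ≠ 0) (hB : B ≠ 0)
    (hlimA : Tendsto (fun x => deriv f x / |x - c| ^ (γ - 1)) (𝓝[<] c) (𝓝 A))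
    (hlimB : Tendsto (fun x => deriv f x / |x - c| ^ (γ - 1)) (𝓝[>] c) (𝓝 B))
    (hh : ContDiff ℝ 1 h) (hhi : ContDiff ℝ 1 hi)
    (hpos : ∀ x, 0 < deriv h x)
    (hleft : Function.LeftInverse hi h) (hright : Function.RightInverse hi h) :
    ∀ A' B' : ℝ, A' ≠ 0 → B' ≠ 0 →
      Tendsto (fun y => deriv (h ∘ f ∘ hi) y / |y - h c| ^ (γ - 1)) (𝓝[<] (h c)) (𝓝 A') →
      Tendsto (fun y => deriv (h ∘ f ∘ hi) y / |y - h c| ^ (γ - 1)) (𝓝[>] (h c)) (𝓝 B') →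
      A' / B' = A / B := by
  intro A' B' hA' hB' htA htB
  have hdhi : Differentiable ℝ hi := hhi.differentiable one_ne_zero
  have hdh : Differentiable ℝ h := hh.differentiable one_ne_zero
  have hipos : ∀ y, 0 < deriv hi y := by
    intro y
    have hcomp : HasDerivAt (h ∘ hi) (deriv h (hi y) * deriv hi y) y :=
      ((hdh (hi y)).hasDerivAt).comp y ((hdhi y).hasDerivAt)
    have hid : HasDerivAt (h ∘ hi) 1 y := by
      have : (h ∘ hi) = id := funext hright
      rw [this]; simpa using hasDerivAt_id y
    have h1 : deriv h (hi y) * deriv hi y = 1 := hcomp.unique hid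
    nlinarith [hpos (hi y)]
  have hmono : StrictMono hi := strictMono_of_deriv_pos hipos
  have hihc : hi (h c) = c := hleft c
  have hhinhds : Tendsto hi (𝓝 (h c)) (𝓝 c) := by
    simpa [hihc] using hhi.continuous.tendsto (h c)
  -- left side
  have hsL : Tendsto hi (𝓝[<] (h c)) (𝓝[Set.Iio c] c) := by
    apply tendsto_nhdsWithin_of_tendsto_nhds_of_eventually_within
    · exact hhinhds.mono_left nhdsWithin_le_nhds
    · filter_upwards [self_mem_nhdsWithin] with y hy
      simpa [hihc] using hmono hy
  have hsR : Tendsto hi (𝓝[>] (h c)) (𝓝[Set.Ioi c] c) := by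
    apply tendsto_nhdsWithin_of_tendsto_nhds_of_eventually_within
    · exact hhinhds.mono_left nhdsWithin_le_nhds
    · filter_upwards [self_mem_nhdsWithin] with y hy
      simpa [hihc] using hmono hy
  have hlL : 𝓝[<] (h c) ≤ 𝓝[≠] (h c) := nhdsWithin_mono _ (fun y hy => ne_of_lt hy)
  have hlR : 𝓝[>] (h c) ≤ 𝓝[≠] (h c) := nhdsWithin_mono _ (fun y hy => ne_of_gt hy)
  have hevL : ∀ᶠ y in 𝓝[<] (h c), hi y ∈ Set.Iio c := by
    filter_upwards [self_mem_nhdsWithin] with y hy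
    simpa [hihc] using hmono hy
  have hevR : ∀ᶠ y in 𝓝[>] (h c), hi y ∈ Set.Ioi c := by
    filter_upwards [self_mem_nhdsWithin] with y hy
    simpa [hihc] using hmono hy
  have hAeq := conj_limit f h hi c γ A hf hγ hh hhi hleft hipos (𝓝[<] (h c)) hlL
    (Set.Iio c) (by simp) hsL hevL hlimA A' htA
  have hBeq := conj_limit f h hi c γ B hf hγ hh hhi hleft hipos (𝓝[>] (h c)) hlR
    (Set.Ioi c) (by simp) hsR hevR hlimB B' htB
  set D := deriv h (f c) with hD
  set M := deriv hi (h c) * (deriv hi (h c)) ^ (γ - 1) with hM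
  have hDpos : 0 < D := hpos (f c)
  have hMpos : 0 < M := mul_pos (hipos (h c)) (Real.rpow_pos_of_pos (hipos (h c)) _)
  rw [hAeq, hBeq]
  rw [div_eq_div_iff (by positivity) hB]
  ring
end

section
/- Let f : ℝ → ℝ be C¹ and p a fixed point of f^{∘k} with λ = (f^{∘k})'(p) satisfying |λ| > 1. Let {I_l} be nested compact intervals shrinking to p with f^{∘k}(I_l) = I_{l−1}. Then lim_{l→∞} |I_l|/|I_{l−1}| = 1/|λ|. -/
open Filter Topology

private lemma contDiff_iterate (f : ℝ → ℝ) (hf : ContDiff ℝ 1 f) (k : ℕ) :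
    ContDiff ℝ 1 (f^[k]) := by
  induction k with
  | zero => simpa using contDiff_id
  | succ n ih => rw [Function.iterate_succ']; exact hf.comp ih

private lemma mvt_pair (g : ℝ → ℝ) (hg : Differentiable ℝ g) {A B u v : ℝ}
    (hu : u ∈ Set.Icc A B) (hv : v ∈ Set.Icc A B) :
    ∃ c ∈ Set.Icc A B, g u - g v = deriv g c * (u - v) := by
  rcases lt_trichotomy v u with h | h | h
  · obtain ⟨c, hc, hc'⟩ := exists_deriv_eq_slope g h hg.continuous.continuousOn
      (fun x _ => (hg x).differentiableWithinAt)
    refine ⟨c, ⟨le_trans hv.1 hc.1.le, le_trans hc.2.le hu.2⟩, ?_⟩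
    rw [eq_comm, hc', div_mul_cancel₀]
    exact sub_ne_zero.mpr h.ne'
  · exact ⟨u, hu, by simp [h]⟩
  · obtain ⟨c, hc, hc'⟩ := exists_deriv_eq_slope g h hg.continuous.continuousOn
      (fun x _ => (hg x).differentiableWithinAt)
    refine ⟨c, ⟨le_trans hu.1 hc.1.le, le_trans hc.2.le hv.2⟩, ?_⟩
    have : g v - g u = deriv g c * (v - u) := by
      rw [eq_comm, hc', div_mul_cancel₀]
      exact sub_ne_zero.mpr h.ne'
    linarith [this]

theorem stmt_10 (f : ℝ → ℝ) (k : ℕ) (p lam : ℝ) (a b : ℕ → ℝ)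
    (hf : ContDiff ℝ 1 f) (hk : 1 ≤ k)
    (hp : f^[k] p = p) (hlam : lam = deriv (f^[k]) p) (hexp : 1 < |lam|)
    (hmem : ∀ l, p ∈ Set.Icc (a l) (b l)) (hab : ∀ l, a l < b l)
    (hnested : ∀ l, Set.Icc (a (l + 1)) (b (l + 1)) ⊆ Set.Icc (a l) (b l))
    (hlen : Tendsto (fun l => b l - a l) atTop (𝓝 0))
    (honto : ∀ l, f^[k] '' Set.Icc (a (l + 1)) (b (l + 1)) = Set.Icc (a l) (b l)) :
    Tendsto (fun l => (b (l + 1) - a (l + 1)) / (b l - a l)) atTop (𝓝 (1 / |lam|)) := by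
  set g := f^[k] with hgdef
  have hgC : ContDiff ℝ 1 g := contDiff_iterate f hf k
  have hgd : Differentiable ℝ g := hgC.differentiable one_ne_zero
  have hcont' : Continuous (deriv g) := hgC.continuous_deriv le_rfl
  have hlampos : (0:ℝ) < |lam| := lt_trans one_pos hexp
  have hlenpos : ∀ l, 0 < b l - a l := fun l => sub_pos.mpr (hab l)
  -- points mapping to the endpoints
  have hx : ∀ l, ∃ x ∈ Set.Icc (a (l+1)) (b (l+1)), g x = b l := by
    intro l
    have : b l ∈ g '' Set.Icc (a (l+1)) (b (l+1)) :=
      (honto l).symm ▸ Set.right_mem_Icc.mpr (hab l).le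
    obtain ⟨x, hx1, hx2⟩ := this
    exact ⟨x, hx1, hx2⟩
  have hy : ∀ l, ∃ y ∈ Set.Icc (a (l+1)) (b (l+1)), g y = a l := by
    intro l
    have : a l ∈ g '' Set.Icc (a (l+1)) (b (l+1)) :=
      (honto l).symm ▸ Set.left_mem_Icc.mpr (hab l).le
    obtain ⟨y, hy1, hy2⟩ := this
    exact ⟨y, hy1, hy2⟩
  choose x hxmem hgx using hx
  choose y hymem hgy using hy
  have hc : ∀ l, ∃ c ∈ Set.Icc (a (l+1)) (b (l+1)),
      g (x l) - g (y l) = deriv g c * (x l - y l) :=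
    fun l => mvt_pair g hgd (hxmem l) (hymem l)
  choose c hcmem hceq using hc
  have hxi : ∀ l, ∃ ξ ∈ Set.Icc (a (l+1)) (b (l+1)),
      g (b (l+1)) - g (a (l+1)) = deriv g ξ * (b (l+1) - a (l+1)) :=
    fun l => mvt_pair g hgd (Set.right_mem_Icc.mpr (hab _).le)
      (Set.left_mem_Icc.mpr (hab _).le)
  choose ξ hξmem hξeq using hxi
  -- upper bound
  have hub : ∀ l, (b l - a l) / (b (l+1) - a (l+1)) ≤ |deriv g (c l)| := by
    intro l
    rw [div_le_iff₀ (hlenpos (l+1))]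
    calc b l - a l = g (x l) - g (y l) := by rw [hgx, hgy]
      _ ≤ |g (x l) - g (y l)| := le_abs_self _
      _ = |deriv g (c l)| * |x l - y l| := by rw [hceq l, abs_mul]
      _ ≤ |deriv g (c l)| * (b (l+1) - a (l+1)) := by
          apply mul_le_mul_of_nonneg_left _ (abs_nonneg _)
          rw [abs_sub_le_iff]
          constructor <;>
            linarith [(hxmem l).1, (hxmem l).2, (hymem l).1, (hymem l).2]
  -- lower bound
  have hlb : ∀ l, |deriv g (ξ l)| ≤ (b l - a l) / (b (l+1) - a (l+1)) := by
    intro l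
    rw [le_div_iff₀ (hlenpos (l+1))]
    have h1 : g (b (l+1)) ∈ Set.Icc (a l) (b l) :=
      (honto l) ▸ Set.mem_image_of_mem g (Set.right_mem_Icc.mpr (hab _).le)
    have h2 : g (a (l+1)) ∈ Set.Icc (a l) (b l) :=
      (honto l) ▸ Set.mem_image_of_mem g (Set.left_mem_Icc.mpr (hab _).le)
    calc |deriv g (ξ l)| * (b (l+1) - a (l+1))
        = |deriv g (ξ l) * (b (l+1) - a (l+1))| := by
          rw [abs_mul, abs_of_pos (hlenpos (l+1))]
      _ = |g (b (l+1)) - g (a (l+1))| := by rw [hξeq l]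
      _ ≤ b l - a l := by
          rw [abs_sub_le_iff]
          constructor <;> linarith [h1.1, h1.2, h2.1, h2.2]
  -- sequences in the shrinking intervals tend to p
  have hlen1 : Tendsto (fun l => b (l+1) - a (l+1)) atTop (𝓝 0) :=
    hlen.comp (tendsto_add_atTop_nat 1)
  have hto : ∀ (z : ℕ → ℝ), (∀ l, z l ∈ Set.Icc (a (l+1)) (b (l+1))) →
      Tendsto (fun l => |deriv g (z l)|) atTop (𝓝 |lam|) := by
    intro z hz
    have hzp : Tendsto z atTop (𝓝 p) := by
      rw [tendsto_iff_dist_tendsto_zero]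
      apply squeeze_zero (fun l => dist_nonneg) _ hlen1
      intro l
      have hp' := hmem (l+1)
      rw [Real.dist_eq, abs_sub_le_iff]
      constructor <;> linarith [(hz l).1, (hz l).2, hp'.1, hp'.2]
    have h1 : Tendsto (fun l => deriv g (z l)) atTop (𝓝 (deriv g p)) :=
      (hcont'.tendsto p).comp hzp
    have h2 := h1.abs
    rwa [hlam]
  have hr : Tendsto (fun l => (b l - a l) / (b (l+1) - a (l+1))) atTop (𝓝 |lam|) :=
    tendsto_of_tendsto_of_tendsto_of_le_of_le (hto ξ hξmem) (hto c hcmem) hlb hub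
  have := hr.inv₀ (ne_of_gt hlampos)
  simpa [one_div, inv_div] using this
end
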